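/- Let $Q^* = s(nn^T - \tfrac{1}{3}I)$ with $n$ a unit vector and $s$ satisfying $2cs^2 - bs - 3a = 0$. Then the Hessian operator $\mathcal{H}_{Q^*}(Q) = -aQ - b\mathcal{B}(Q, Q^*) + c\,\mathcal{C}(Q, Q^*, Q^*)$ (with $\mathcal{B}$, $\mathcal{C}$ as defined) coincides with $\mathcal{H}_n(Q) = bs\big(Q - (nn^TQ + Qnn^T) + \tfrac{2}{3}(Q : nn^T)I\big) + 2cs^2(Q : nn^T)\big(nn^T - \tfrac{1}{3}I\big)$ for every symmetric traceless $3\times 3$ matrix $Q$. -/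
import Mathlib


open Matrix BigOperators

noncomputable section

abbrev M3 := Matrix (Fin 3) (Fin 3) ℝ

def frob (A B : M3) : ℝ := ∑ i, ∑ j, A i j * B i j

def Bop (Q₁ Q₂ : M3) : M3 := Q₁ * Q₂ + Q₂ * Q₁ - (2/3 * frob Q₁ Q₂) • (1 : M3)

def Cop (Q₁ Q₂ Q₃ : M3) : M3 :=
  (frob Q₂ Q₃) • Q₁ + (frob Q₁ Q₃) • Q₂ + (frob Q₁ Q₂) • Q₃

def Hn (b c s : ℝ) (n : Fin 3 → ℝ) (Q : M3) : M3 :=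
  (b * s) • (Q - (vecMulVec n n * Q + Q * vecMulVec n n)
      + (2/3 * frob Q (vecMulVec n n)) • (1 : M3))
    + (2 * c * s ^ 2 * frob Q (vecMulVec n n)) • (vecMulVec n n - (1/3 : ℝ) • (1 : M3))

lemma frob_smul_right (A : M3) (r : ℝ) (B : M3) : frob A (r • B) = r * frob A B := by
  simp [frob, Finset.mul_sum, mul_left_comm]

lemma frob_sub_right (A B C : M3) : frob A (B - C) = frob A B - frob A C := by
  simp [frob, mul_sub, Finset.sum_sub_distrib]

lemma frob_smul_left (r : ℝ) (A B : M3) : frob (r • A) B = r * frob A B := by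
  simp [frob, Finset.mul_sum, mul_assoc]

lemma frob_sub_left (A B C : M3) : frob (A - B) C = frob A C - frob B C := by
  simp [frob, sub_mul, Finset.sum_sub_distrib]

lemma frob_one (Q : M3) : frob Q 1 = Q.trace := by
  simp [frob, Matrix.one_apply, Matrix.trace, Matrix.diag]

lemma frob_one_left (Q : M3) : frob 1 Q = Q.trace := by
  simp [frob, Matrix.one_apply, Matrix.trace, Matrix.diag]

lemma frob_vmv_self (n : Fin 3 → ℝ) (hn : (∑ i, n i * n i) = 1) :
    frob (vecMulVec n n) (vecMulVec n n) = 1 := by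
  simp only [frob, vecMulVec_apply]
  calc (∑ i, ∑ j, (n i * n j) * (n i * n j))
      = (∑ i, n i * n i) * (∑ j, n j * n j) := by
        rw [Finset.sum_mul_sum]
        exact Finset.sum_congr rfl fun i _ => Finset.sum_congr rfl fun j _ => by ring
    _ = 1 := by rw [hn]; ring

lemma trace_vmv (n : Fin 3 → ℝ) : (vecMulVec n n).trace = ∑ i, n i * n i := by
  simp [Matrix.trace, Matrix.diag, vecMulVec_apply]

/-- With `Q* = s(nnᵀ - I/3)` and `2cs² - bs - 3a = 0`, the Hessian
`ℋ_{Q*}(Q) = -aQ - bℬ(Q,Q*) + c𝒞(Q,Q*,Q*)` coincides with `ℋₙ(Q)`. -/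
theorem stmt12 (a b c s : ℝ) (hroot : 2 * c * s ^ 2 - b * s - 3 * a = 0)
    (n : Fin 3 → ℝ) (hn : (∑ i, n i * n i) = 1)
    (Qs : M3) (hQs : Qs = s • (vecMulVec n n - (1/3 : ℝ) • (1 : M3)))
    (Q : M3) (hsym : Qᵀ = Q) (htr : Q.trace = 0) :
    (-a) • Q - b • Bop Q Qs + c • Cop Q Qs Qs = Hn b c s n Q := by
  subst hQs
  set N := vecMulVec n n with hN
  have htrN : (N : M3).trace = 1 := by rw [hN, trace_vmv, hn]
  have hQ1 : frob Q (1 : M3) = 0 := by rw [frob_one, htr]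
  have h1Q : frob (1 : M3) Q = 0 := by rw [frob_one_left, htr]
  have hQN : frob Q (s • (N - (1/3 : ℝ) • (1 : M3))) = s * frob Q N := by
    rw [frob_smul_right, frob_sub_right, frob_smul_right, hQ1]; ring
  have hSS : frob (s • (N - (1/3 : ℝ) • (1 : M3))) (s • (N - (1/3 : ℝ) • (1 : M3)))
      = 2/3 * s ^ 2 := by
    rw [frob_smul_left, frob_smul_right, frob_sub_left, frob_sub_right, frob_sub_right,
      frob_smul_right, frob_smul_left, frob_smul_left, frob_smul_right,
      frob_vmv_self n hn, frob_one, frob_one_left, frob_one, htrN]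
    simp [Matrix.trace_one]; ring
  simp only [Bop, Cop, Hn, hQN, hSS, ← hN]
  simp only [Matrix.mul_smul, Matrix.smul_mul, Matrix.mul_sub, Matrix.sub_mul,
    mul_one, one_mul, smul_sub, smul_add]
  match_scalars <;> ring_nf <;> nlinarith [hroot, sq_nonneg s]
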